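/- Let f be an isotropic invariant of Hall tensors, i.e., f(⟨Q⟩K) = f(K) for every orthogonal 3×3 matrix Q and every Hall tensor K. Define g(A) := f(εA) for 3×3 matrices A. Then g(Q A Qᵀ) = g(A) for every orthogonal Q with det Q = 1, and g(-Q A Qᵀ) = g(A) for every orthogonal Q with det Q = -1. -/

import Mathlib

/-!
The Levi-Civita symbol is an isotropic pseudo-tensor: `⟨Q⟩ε = (det Q) ε` for every `Q`.
For orthogonal `Q` this gives `⟨Q⟩(εA) = ε((det Q) Q A Qᵀ)`, so applying the invariance of `f`
to the Hall tensor `εA` yields `g((det Q) Q A Qᵀ) = g(A)`, which is the claim for `det Q = ±1`.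
-/

open Matrix

/-- The Levi-Civita symbol on `Fin 3`. -/
noncomputable def lc (i j k : Fin 3) : ℝ :=
  ((((j.val : ℤ) - i.val) * ((k.val : ℤ) - j.val) * ((k.val : ℤ) - i.val)) / 2 : ℤ)

/-- The Hall tensor `εA` associated to a 3×3 matrix: `k_{ijk} = Σ_l ε_{ijl} a_{lk}`. -/
noncomputable def toHall (A : Matrix (Fin 3) (Fin 3) ℝ) : Fin 3 → Fin 3 → Fin 3 → ℝ :=
  fun i j k => ∑ l, lc i j l * A l k

/-- The matrix `εK` associated to a third order tensor: `(εK)_{ij} = Σ_{k,l} ε_{kli} k_{klj}`. -/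
noncomputable def toMat (K : Fin 3 → Fin 3 → Fin 3 → ℝ) : Matrix (Fin 3) (Fin 3) ℝ :=
  Matrix.of fun i j => ∑ k, ∑ l, lc k l i * K k l j

/-- Orthogonal transformation of a third order tensor. -/
noncomputable def rot (Q : Matrix (Fin 3) (Fin 3) ℝ) (K : Fin 3 → Fin 3 → Fin 3 → ℝ) :
    Fin 3 → Fin 3 → Fin 3 → ℝ :=
  fun i j k => ∑ p, ∑ q, ∑ r, Q i p * Q j q * Q k r * K p q r

noncomputable def symmPart (A : Matrix (Fin 3) (Fin 3) ℝ) : Matrix (Fin 3) (Fin 3) ℝ :=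
  (1/2 : ℝ) • (A + Aᵀ)

noncomputable def skewPart (A : Matrix (Fin 3) (Fin 3) ℝ) : Matrix (Fin 3) (Fin 3) ℝ :=
  (1/2 : ℝ) • (A - Aᵀ)

lemma lc_eq : lc = ![![![0, 0, 0], ![0, 0, 1], ![0, -1, 0]],
    ![![0, 0, -1], ![0, 0, 0], ![1, 0, 0]], ![![0, 1, 0], ![-1, 0, 0], ![0, 0, 0]]] := by
  funext i j k
  fin_cases i <;> fin_cases j <;> fin_cases k <;> norm_num [lc]

lemma lc_swap (i j k : Fin 3) : lc i j k = -lc j i k := by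
  rw [lc_eq]; fin_cases i <;> fin_cases j <;> fin_cases k <;> simp

lemma rot_lc (Q : Matrix (Fin 3) (Fin 3) ℝ) : rot Q lc = Q.det • lc := by
  rw [lc_eq]
  funext i j k
  fin_cases i <;> fin_cases j <;> fin_cases k <;>
    · simp only [rot, det_fin_three, Fin.sum_univ_three, Fin.isValue, Fin.reduceFinMk, Fin.mk_one,
        Fin.zero_eta, cons_val', cons_val, cons_val_zero, cons_val_one, cons_val_fin_one,
        Pi.smul_apply, smul_eq_mul]
      ring

lemma rot_apply_eq_mulVec (Q : Matrix (Fin 3) (Fin 3) ℝ) (K : Fin 3 → Fin 3 → Fin 3 → ℝ)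
    (i j : Fin 3) :
    rot Q K i j = Q *ᵥ ∑ p, ∑ q, (Q i p * Q j q) • K p q := by
  funext k
  simp only [rot, mulVec, dotProduct, Finset.sum_apply, Pi.smul_apply, smul_eq_mul,
    Finset.mul_sum]
  conv_rhs => rw [Finset.sum_comm]
  refine Finset.sum_congr rfl fun p _ => ?_
  conv_rhs => rw [Finset.sum_comm]
  refine Finset.sum_congr rfl fun q _ => Finset.sum_congr rfl fun r _ => ?_
  ring

lemma toHall_apply_eq_vecMul (A : Matrix (Fin 3) (Fin 3) ℝ) (i j : Fin 3) :
    toHall A i j = lc i j ᵥ* A :=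
  rfl

lemma sum_smul_lc_of_orthogonal {Q : Matrix (Fin 3) (Fin 3) ℝ} (hQ : Qᵀ * Q = 1) (i j : Fin 3) :
    ∑ p, ∑ q, (Q i p * Q j q) • lc p q = Q.det • (lc i j ᵥ* Q) := by
  have hrot := congrFun (congrFun (rot_lc Q) i) j
  rw [rot_apply_eq_mulVec] at hrot
  calc ∑ p, ∑ q, (Q i p * Q j q) • lc p q
      = Qᵀ *ᵥ Q *ᵥ ∑ p, ∑ q, (Q i p * Q j q) • lc p q := by
        rw [mulVec_mulVec, hQ, one_mulVec]
    _ = Q.det • (lc i j ᵥ* Q) := by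
        rw [hrot]
        simp only [Pi.smul_apply, mulVec_smul, mulVec_transpose]

lemma rot_toHall {Q : Matrix (Fin 3) (Fin 3) ℝ} (hQ : Qᵀ * Q = 1)
    (A : Matrix (Fin 3) (Fin 3) ℝ) :
    rot Q (toHall A) = toHall (Q.det • (Q * A * Qᵀ)) := by
  funext i j
  calc rot Q (toHall A) i j
      = Q *ᵥ ((∑ p, ∑ q, (Q i p * Q j q) • lc p q) ᵥ* A) := by
        simp only [rot_apply_eq_mulVec, toHall_apply_eq_vecMul, sum_vecMul, smul_vecMul]
    _ = toHall (Q.det • (Q * A * Qᵀ)) i j := by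
        rw [sum_smul_lc_of_orthogonal hQ, toHall_apply_eq_vecMul, ← vecMul_transpose]
        simp only [smul_vecMul, vecMul_vecMul, Matrix.mul_assoc, vecMul_smul]

lemma toHall_swap (A : Matrix (Fin 3) (Fin 3) ℝ) (i j k : Fin 3) :
    toHall A i j k = -toHall A j i k := by
  simp only [toHall, lc_swap i j, neg_mul, Finset.sum_neg_distrib]

/-- If `f` is an isotropic invariant of Hall tensors, then `g(A) := f(εA)`
is invariant under proper rotations of `A`, and invariant under
`A ↦ -QAQᵀ` for improper orthogonal `Q`. -/
theorem invariant_of_hall_invariant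
    (f : (Fin 3 → Fin 3 → Fin 3 → ℝ) → ℝ)
    (hf : ∀ (Q : Matrix (Fin 3) (Fin 3) ℝ), Qᵀ * Q = 1 →
      ∀ K : Fin 3 → Fin 3 → Fin 3 → ℝ, (∀ i j k, K i j k = - K j i k) →
        f (rot Q K) = f K)
    (g : Matrix (Fin 3) (Fin 3) ℝ → ℝ) (hg : ∀ A, g A = f (toHall A)) :
    ∀ (Q : Matrix (Fin 3) (Fin 3) ℝ), Qᵀ * Q = 1 →
      ∀ A : Matrix (Fin 3) (Fin 3) ℝ,
        (Q.det = 1 → g (Q * A * Qᵀ) = g A) ∧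
        (Q.det = -1 → g (-(Q * A * Qᵀ)) = g A) := by
  intro Q hQ A
  have h : g (Q.det • (Q * A * Qᵀ)) = g A := by
    rw [hg, hg, ← rot_toHall hQ, hf Q hQ _ (toHall_swap A)]
  refine ⟨fun hdet => ?_, fun hdet => ?_⟩
  · rwa [hdet, one_smul] at h
  · rwa [hdet, neg_one_smul] at h
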